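/- arXiv:2203.12364 — 6 statements merged into one kernel-verified Lean document; each statement's English description precedes it below -/
import Mathlib

section
/- Let a > 1, K ≥ 1, n ≥ 1 be integers and d a divisor of n. The number of primes p ≤ K·n with multiplicative order of a modulo p equal to d is at most min(K·n/d, d·log a / log 2). -/
/-!
A prime `p` at which `a` has order `d` satisfies both `d ∣ p - 1` and `p ∣ a ^ d - 1`.
The first condition leaves at most `K n / d` candidates up to `K n`. By the second, the
product of all such primes divides `a ^ d - 1 < a ^ d`, while it is at least `2` to the
number of them.
-/

open Finset

theorem ZMod.orderOf_dvd_card_sub_one_of_orderOf_ne_zero {p : ℕ} [Fact p.Prime] {x : ZMod p}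
    (h : orderOf x ≠ 0) : orderOf x ∣ p - 1 :=
  ZMod.orderOf_dvd_card_sub_one fun hx => h (hx ▸ orderOf_zero _)

theorem Nat.dvd_pow_orderOf_natCast_sub_one (a p : ℕ) : p ∣ a ^ orderOf (a : ZMod p) - 1 := by
  have h : ((a ^ orderOf (a : ZMod p) : ℕ) : ZMod p) = ((1 : ℕ) : ZMod p) := by
    push_cast
    exact pow_orderOf_eq_one _
  rcases eq_or_ne (a ^ orderOf (a : ZMod p)) 0 with h0 | h0
  · simp [h0]
  · exact (Nat.modEq_iff_dvd' (Nat.one_le_iff_ne_zero.mpr h0)).mp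
      ((ZMod.natCast_eq_natCast_iff _ _ _).mp h).symm

theorem card_le_div_of_forall_dvd_sub_one {S : Finset ℕ} {N d : ℕ}
    (h : ∀ p ∈ S, 2 ≤ p ∧ p ≤ N ∧ d ∣ p - 1) : #S ≤ N / d := by
  rw [← Nat.Ioc_filter_dvd_card_eq_div]
  refine card_le_card_of_injOn (· - 1) (fun p hp => ?_) (fun p hp q hq hpq => ?_)
  · obtain ⟨h2, hN, hd⟩ := h p hp
    simp only [coe_filter, Set.mem_ofPred_eq, mem_Ioc]
    exact ⟨⟨by omega, by omega⟩, hd⟩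
  · have := (h p hp).1
    have := (h q hq).1
    simp only at hpq
    omega

theorem two_pow_card_le_of_forall_prime_dvd {S : Finset ℕ} {m : ℕ} (hm : m ≠ 0)
    (h : ∀ p ∈ S, p.Prime ∧ p ∣ m) : 2 ^ #S ≤ m :=
  calc 2 ^ #S = ∏ _p ∈ S, 2 := (prod_const 2).symm
    _ ≤ ∏ p ∈ S, p := prod_le_prod' fun p hp => (h p hp).1.two_le
    _ ≤ m := Nat.le_of_dvd (Nat.pos_of_ne_zero hm)
      (prod_primes_dvd m (fun p hp => (h p hp).1.prime) fun p hp => (h p hp).2)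

theorem card_primes_le_with_order_le_min_general
    (a K n d : ℕ) (ha : 1 < a) (hn : 1 ≤ n) (hdn : d ∣ n) :
    (((Finset.range (K * n + 1)).filter
        (fun p => p.Prime ∧ orderOf (a : ZMod p) = d)).card : ℝ) ≤
      min ((K * n : ℝ) / d) (d * Real.log a / Real.log 2) := by
  set S := (range (K * n + 1)).filter fun p => p.Prime ∧ orderOf (a : ZMod p) = d
  have hd : d ≠ 0 := (Nat.pos_of_dvd_of_pos hdn hn).ne'
  have hmem : ∀ p ∈ S, p.Prime ∧ p ≤ K * n ∧ orderOf (a : ZMod p) = d := fun p hp => by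
    simp only [S, mem_filter, mem_range] at hp
    exact ⟨hp.2.1, by omega, hp.2.2⟩
  refine le_min ?_ ?_
  · have hcard : #S ≤ K * n / d := card_le_div_of_forall_dvd_sub_one fun p hp => by
      obtain ⟨hp, hpN, hord⟩ := hmem p hp
      have := Fact.mk hp
      exact ⟨hp.two_le, hpN, hord ▸ ZMod.orderOf_dvd_card_sub_one_of_orderOf_ne_zero (hord ▸ hd)⟩
    calc (#S : ℝ) ≤ ((K * n / d : ℕ) : ℝ) := by exact_mod_cast hcard
      _ ≤ (K * n : ℝ) / d := by exact_mod_cast Nat.cast_div_le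
  · have hpow : 2 ^ #S ≤ a ^ d - 1 :=
      two_pow_card_le_of_forall_prime_dvd
        (Nat.sub_ne_zero_of_lt (Nat.one_lt_pow hd ha)) fun p hp =>
          ⟨(hmem p hp).1, (hmem p hp).2.2 ▸ Nat.dvd_pow_orderOf_natCast_sub_one a p⟩
    have hpow' : (2 : ℝ) ^ #S ≤ (a : ℝ) ^ d := by exact_mod_cast hpow.trans (Nat.sub_le _ _)
    rw [le_div_iff₀ (Real.log_pos one_lt_two), ← Real.log_pow, ← Real.log_pow]
    exact Real.log_le_log (by positivity) hpow'

theorem card_primes_le_with_order_le_min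
    (a K n d : ℕ) (ha : 1 < a) (hK : 1 ≤ K) (hn : 1 ≤ n) (hdn : d ∣ n) :
    (((Finset.range (K * n + 1)).filter
        (fun p => p.Prime ∧ orderOf (a : ZMod p) = d)).card : ℝ) ≤
      min ((K * n : ℝ) / d) (d * Real.log a / Real.log 2) :=
  card_primes_le_with_order_le_min_general a K n d ha hn hdn
end

section
/- Let a > 1 be an integer and set u_n = a^n - 1. For every ε > 0, the sum over primes p ≤ n with p ∣ u_n of log p is O(n^{1/2 + ε}) as n → ∞. -/
/-!
Group the primes `p ≤ n` dividing `a ^ n - 1` by the order `d` of `a` modulo `p`; each such `d`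
divides `n`. The primes of order `d` divide `a ^ d - 1`, so their logarithms sum to at most
`d log a`; they are also `≡ 1 mod d`, so there are at most `n / d + 1` of them. Using the first
bound for `d ≤ √n` and the second for `d > √n`, each class contributes `O(√n log (a n))`, and
there are `d(n) = O(n^ε)` classes.
-/

open Real Finset Filter Asymptotics

theorem Real.sum_log_le_log_of_forall_prime_dvd {s : Finset ℕ} {m : ℕ} (hm : m ≠ 0)
    (hs : ∀ p ∈ s, p.Prime ∧ p ∣ m) : ∑ p ∈ s, log p ≤ log m := by
  have hprime : ∀ p ∈ s, p.Prime := fun p hp => (hs p hp).1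
  have hdvd : ∏ p ∈ s, p ∣ m :=
    prod_primes_dvd m (fun p hp => (hprime p hp).prime) fun p hp => (hs p hp).2
  rw [← log_prod fun p hp => by exact_mod_cast (hprime p hp).ne_zero, ← Nat.cast_prod]
  exact log_le_log (by exact_mod_cast prod_pos fun p hp => (hprime p hp).pos)
    (by exact_mod_cast Nat.le_of_dvd (Nat.pos_of_ne_zero hm) hdvd)

theorem Nat.dvd_pow_sub_one_iff {a m n : ℕ} (ha : 0 < a) :
    m ∣ a ^ n - 1 ↔ (a : ZMod m) ^ n = 1 := by
  rw [← Nat.modEq_iff_dvd' (Nat.one_le_pow _ _ ha), ← ZMod.natCast_eq_natCast_iff, eq_comm]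
  push_cast
  rfl

theorem Finset.card_le_div_add_one_of_dvd_sub_one {n d : ℕ} {s : Finset ℕ}
    (hs : ∀ p ∈ s, 1 ≤ p ∧ p ≤ n ∧ d ∣ p - 1) : #s ≤ n / d + 1 := by
  have hsub : s ⊆ (range (n / d + 1)).image (fun k => d * k + 1) := by
    intro p hp
    obtain ⟨hp1, hpn, hdvd⟩ := hs p hp
    have hk : (p - 1) / d < n / d + 1 := Nat.lt_succ_of_le (Nat.div_le_div_right (by omega))
    refine mem_image.2 ⟨(p - 1) / d, mem_range.2 hk, ?_⟩
    rw [Nat.mul_div_cancel' hdvd]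
    omega
  exact (card_le_card hsub).trans (card_image_le.trans (card_range _).le)

theorem sum_log_le_mul_log_of_orderOf_eq {a d : ℕ} (ha : 1 < a) (hd : d ≠ 0) {s : Finset ℕ}
    (hs : ∀ p ∈ s, p.Prime ∧ orderOf (a : ZMod p) = d) :
    ∑ p ∈ s, log p ≤ d * log a := by
  have hpow : 1 < a ^ d := Nat.one_lt_pow hd ha
  calc ∑ p ∈ s, log p ≤ log (a ^ d - 1 : ℕ) := by
        refine Real.sum_log_le_log_of_forall_prime_dvd (by omega) fun p hp => ⟨(hs p hp).1, ?_⟩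
        rw [Nat.dvd_pow_sub_one_iff (by omega), ← (hs p hp).2]
        exact pow_orderOf_eq_one _
    _ ≤ log (a ^ d : ℕ) :=
        log_le_log (by exact_mod_cast Nat.sub_pos_of_lt hpow) (by exact_mod_cast Nat.sub_le _ _)
    _ = d * log a := by push_cast; exact Real.log_pow a d

theorem sum_log_le_of_orderOf_eq {a n d : ℕ} (ha : 1 < a) (hd : d ≠ 0) {s : Finset ℕ}
    (hs : ∀ p ∈ s, p.Prime ∧ p ≤ n ∧ orderOf (a : ZMod p) = d) :
    ∑ p ∈ s, log p ≤ (√n + 1) * (log a + log n) := by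
  have hloga : 0 ≤ log a := log_natCast_nonneg a
  have hlogn : 0 ≤ log n := log_natCast_nonneg n
  rcases le_or_gt (d : ℝ) √n with hsmall | hlarge
  · calc ∑ p ∈ s, log p ≤ d * log a :=
          sum_log_le_mul_log_of_orderOf_eq ha hd fun p hp => ⟨(hs p hp).1, (hs p hp).2.2⟩
      _ ≤ (√n + 1) * (log a + log n) := by nlinarith
  · have hcard : #s ≤ n / d + 1 := by
      refine card_le_div_add_one_of_dvd_sub_one fun p hp => ?_
      obtain ⟨hp, hpn, hord⟩ := hs p hp
      have := Fact.mk hp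
      have ha0 : (a : ZMod p) ≠ 0 := fun h0 => hd (by rw [← hord, h0, orderOf_zero])
      exact ⟨hp.one_lt.le, hpn, hord ▸ ZMod.orderOf_dvd_card_sub_one ha0⟩
    have hcardR : (#s : ℝ) ≤ √n + 1 := by
      calc (#s : ℝ) ≤ (n / d : ℕ) + 1 := by exact_mod_cast hcard
        _ ≤ √n + 1 := by
          gcongr
          refine Nat.cast_div_le.trans ((div_le_iff₀ ((sqrt_nonneg _).trans_lt hlarge)).2 ?_)
          calc (n : ℝ) = √n * √n := (mul_self_sqrt n.cast_nonneg).symm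
            _ ≤ √n * d := by gcongr
    calc ∑ p ∈ s, log p ≤ #s • log n :=
          sum_le_card_nsmul _ _ _ fun p hp => log_le_log (by exact_mod_cast (hs p hp).1.pos)
            (by exact_mod_cast (hs p hp).2.1)
      _ ≤ (√n + 1) * (log a + log n) := by rw [nsmul_eq_mul]; nlinarith

theorem sum_log_primes_dvd_pow_sub_one_le {a n : ℕ} (ha : 1 < a) (hn : n ≠ 0) :
    ∑ p ∈ (range (n + 1)).filter (fun p => p.Prime ∧ p ∣ a ^ n - 1), log p ≤
      #n.divisors * ((√n + 1) * (log a + log n)) := by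
  set P := (range (n + 1)).filter (fun p => p.Prime ∧ p ∣ a ^ n - 1)
  have hP : ∀ p ∈ P, p.Prime ∧ p ≤ n ∧ (a : ZMod p) ^ n = 1 := by
    intro p hp
    obtain ⟨hpn, hp, hdvd⟩ := mem_filter.1 hp
    exact ⟨hp, Nat.lt_succ_iff.1 (mem_range.1 hpn), (Nat.dvd_pow_sub_one_iff (by omega)).1 hdvd⟩
  have hord : ∀ p ∈ P, orderOf (a : ZMod p) ∈ n.divisors := fun p hp =>
    Nat.mem_divisors.2 ⟨orderOf_dvd_of_pow_eq_one (hP p hp).2.2, hn⟩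
  rw [← sum_fiberwise_of_maps_to hord, ← nsmul_eq_mul]
  refine sum_le_card_nsmul _ _ _ fun d hd => ?_
  refine sum_log_le_of_orderOf_eq ha (Nat.pos_of_mem_divisors hd).ne' fun p hp => ?_
  obtain ⟨hpP, hpd⟩ := mem_filter.1 hp
  exact ⟨(hP p hpP).1, (hP p hpP).2.1, hpd⟩

theorem Nat.cast_add_one_le_pow {y : ℝ} (hy : 2 ≤ y) (k : ℕ) : (k : ℝ) + 1 ≤ y ^ k := by
  have := one_add_mul_le_pow (show (-2 : ℝ) ≤ y - 1 by linarith) k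
  rw [add_sub_cancel] at this
  nlinarith [k.cast_nonneg (α := ℝ)]

theorem exists_cast_add_one_le_mul_pow {r : ℝ} (hr : 1 < r) :
    ∃ M : ℝ, 1 ≤ M ∧ ∀ k : ℕ, (k : ℝ) + 1 ≤ M * r ^ k := by
  obtain ⟨B, hB⟩ := (tendsto_pow_const_div_const_pow_of_one_lt 1 hr).bddAbove_range
  have hB' : ∀ k : ℕ, (k : ℝ) ≤ B * r ^ k := fun k => by
    have : (k : ℝ) ^ 1 / r ^ k ≤ B := hB ⟨k, rfl⟩
    rwa [pow_one, div_le_iff₀ (by positivity)] at this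
  refine ⟨B + 1, by simpa using hB' 0, fun k => ?_⟩
  linarith [hB' k, one_le_pow₀ (n := k) hr.le]

theorem Nat.card_divisors_isBigO_rpow {ε : ℝ} (hε : 0 < ε) :
    (fun n : ℕ => (#n.divisors : ℝ)) =O[atTop] fun n : ℕ => (n : ℝ) ^ ε := by
  obtain ⟨M, hM1, hM⟩ := exists_cast_add_one_le_mul_pow (one_lt_rpow one_lt_two hε)
  -- Primes `p ≥ K` satisfy `p ^ ε ≥ 2`; only the primes below `K` cost the factor `M`.
  set K := ⌈(2 : ℝ) ^ (1 / ε)⌉₊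
  refine IsBigO.of_bound (M ^ K) ((eventually_ne_atTop 0).mono fun n hn => ?_)
  rw [norm_of_nonneg (by positivity), norm_of_nonneg (by positivity)]
  have hfactor : ∀ p ∈ n.primeFactors, (n.factorization p : ℝ) + 1 ≤
      (if p < K then M else 1) * ((p : ℝ) ^ ε) ^ n.factorization p := by
    intro p hp
    have hp2 : (2 : ℝ) ≤ p := by exact_mod_cast (Nat.prime_of_mem_primeFactors hp).two_le
    split_ifs with hpK
    · calc _ ≤ M * ((2 : ℝ) ^ ε) ^ n.factorization p := hM _
        _ ≤ M * ((p : ℝ) ^ ε) ^ n.factorization p := by gcongr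
    · rw [one_mul]
      refine Nat.cast_add_one_le_pow ?_ _
      calc (2 : ℝ) = ((2 : ℝ) ^ (1 / ε)) ^ ε := by
            rw [← rpow_mul zero_le_two, one_div_mul_cancel hε.ne', rpow_one]
        _ ≤ (p : ℝ) ^ ε := by
            gcongr
            exact (Nat.le_ceil _).trans (by exact_mod_cast not_lt.1 hpK)
  have hn_eq : (n : ℝ) ^ ε = ∏ p ∈ n.primeFactors, ((p : ℝ) ^ ε) ^ n.factorization p := by
    conv_lhs => rw [Nat.prod_primeFactors_pow_factorization hn]
    push_cast
    rw [← finsetProd_rpow _ _ fun p _ => by positivity]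
    refine prod_congr rfl fun p _ => ?_
    rw [← rpow_natCast_mul (by positivity), mul_comm, rpow_mul_natCast (by positivity)]
  have hM_pow : ∏ p ∈ n.primeFactors, (if p < K then M else 1) ≤ M ^ K := by
    rw [← prod_filter, prod_const]
    refine pow_le_pow_right₀ hM1 ((card_le_card fun p hp => ?_).trans (card_range K).le)
    exact mem_range.2 (mem_filter.1 hp).2
  calc (#n.divisors : ℝ) = ∏ p ∈ n.primeFactors, ((n.factorization p : ℝ) + 1) := by
        rw [Nat.card_divisors hn]
        push_cast
        rfl
    _ ≤ ∏ p ∈ n.primeFactors, (if p < K then M else 1) * ((p : ℝ) ^ ε) ^ n.factorization p :=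
        prod_le_prod (fun _ _ => by positivity) hfactor
    _ ≤ M ^ K * (n : ℝ) ^ ε := by
        rw [prod_mul_distrib, hn_eq]
        gcongr

theorem sum_log_primes_dividing_isBigO
    (a : ℕ) (ha : 1 < a) (ε : ℝ) (hε : 0 < ε) :
    (fun n : ℕ => ∑ p ∈ (Finset.range (n + 1)).filter
        (fun p => p.Prime ∧ p ∣ a ^ n - 1), Real.log p)
      =O[Filter.atTop] (fun n : ℕ => (n : ℝ) ^ ((1 : ℝ) / 2 + ε)) := by
  have hε2 : 0 < ε / 2 := by linarith
  have hrpow : ∀ {r : ℝ}, 0 < r → Tendsto (fun n : ℕ => ‖(n : ℝ) ^ r‖) atTop atTop := fun hr =>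
    tendsto_norm_atTop_atTop.comp ((tendsto_rpow_atTop hr).comp tendsto_natCast_atTop_atTop)
  have hsqrt : (fun n : ℕ => √n + 1) =O[atTop] fun n : ℕ => (n : ℝ) ^ (1 / 2 : ℝ) :=
    (EventuallyEq.isBigO (.of_forall fun n : ℕ => sqrt_eq_rpow n)).add
      (isLittleO_const_left.2 (Or.inr (hrpow one_half_pos))).isBigO
  have hlog : (fun n : ℕ => log a + log n) =O[atTop] fun n : ℕ => (n : ℝ) ^ (ε / 2) :=
    ((isLittleO_const_left.2 (Or.inr (hrpow hε2))).add
      ((isLittleO_log_rpow_atTop hε2).comp_tendsto tendsto_natCast_atTop_atTop)).isBigO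
  have hbound : (fun n : ℕ => ∑ p ∈ (range (n + 1)).filter (fun p => p.Prime ∧ p ∣ a ^ n - 1),
      log p) =O[atTop] fun n : ℕ => #n.divisors * ((√n + 1) * (log a + log n)) := by
    refine IsBigO.of_bound' ((eventually_ne_atTop 0).mono fun n hn => ?_)
    rw [norm_of_nonneg (sum_nonneg fun p _ => log_natCast_nonneg p),
      norm_of_nonneg (by have := log_natCast_nonneg a; have := log_natCast_nonneg n; positivity)]
    exact sum_log_primes_dvd_pow_sub_one_le ha hn
  refine hbound.trans
    (((Nat.card_divisors_isBigO_rpow hε2).mul (hsqrt.mul hlog)).trans_eventuallyEq ?_)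
  filter_upwards [eventually_ne_atTop 0] with n hn
  have hn_pos : (0 : ℝ) < n := by exact_mod_cast Nat.pos_of_ne_zero hn
  rw [← rpow_add hn_pos, ← rpow_add hn_pos]
  ring_nf
end

section
/- Let a > 1 be an integer, p an odd prime not dividing a, with ℓ = ord_p(a) and o = ν_p(a^ℓ - 1). For a real number N ≥ 2, the sum Σ_{N/2 < n ≤ N} ν_p(a^n - 1) is at most (N/(2ℓ) + 1)·o + Σ_{k ≥ 1} (N/(2ℓp^k) + 1)·[ℓp^k ≤ N], and in particular is O(N·o/ℓ + N/(ℓ p) + log N). -/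
/-!
For `n > 0`, `ν_p(a^n - 1)` vanishes unless `ℓ ∣ n`, and for `ℓ ∣ n` lifting the exponent
gives `ν_p(a^n - 1) = o + ν_p(n/ℓ) = o + #{k ≥ 1 | ℓ p^k ∣ n}`. Summing over `n ∈ (N/2, N]` and
exchanging the sums, the total is `o` times the number of multiples of `ℓ` in the interval plus,
for each `k ≥ 1`, the number of multiples of `ℓ p^k`. The interval contains
`⌊N/d⌋ - ⌊N/(2d)⌋` multiples of `d`: at most `N/(2d) + 1`, at most `N/d`, and none when `d > N`.
Summed over `k`, the bounds `N/(ℓ p^k)` form a geometric series.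
-/

open Finset

namespace Nat

section PowSubOne

variable {a p n : ℕ}

theorem prime_dvd_pow_sub_one_iff (hp : p.Prime) (ha : 0 < a) :
    p ∣ a ^ n - 1 ↔ orderOf (a : ZMod p) ∣ n := by
  have := Fact.mk hp
  rw [orderOf_dvd_iff_pow_eq_one, ← ZMod.natCast_eq_zero_iff,
    Nat.cast_sub (Nat.one_le_pow _ _ ha), sub_eq_zero]
  push_cast
  rfl

theorem orderOf_natCast_pos (hp : p.Prime) (hpa : ¬p ∣ a) : 0 < orderOf (a : ZMod p) := by
  have := Fact.mk hp
  refine orderOf_pos_iff.mpr (isOfFinOrder_iff_pow_eq_one.mpr ⟨p - 1, ?_, ?_⟩)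
  · exact Nat.sub_pos_of_lt hp.one_lt
  · exact ZMod.pow_card_sub_one_eq_one (by rwa [ne_eq, ZMod.natCast_eq_zero_iff])

theorem factorization_pow_sub_one_of_not_orderOf_dvd (hp : p.Prime) (ha : 0 < a)
    (hn : ¬orderOf (a : ZMod p) ∣ n) : (a ^ n - 1).factorization p = 0 :=
  factorization_eq_zero_of_not_dvd ((prime_dvd_pow_sub_one_iff hp ha).not.mpr hn)

theorem factorization_pow_sub_one_of_orderOf_dvd (hp : p.Prime) (hodd : Odd p) (ha : 1 < a)
    (hpa : ¬p ∣ a) (hn : n ≠ 0) (hd : orderOf (a : ZMod p) ∣ n) :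
    (a ^ n - 1).factorization p =
      (a ^ orderOf (a : ZMod p) - 1).factorization p +
        (n / orderOf (a : ZMod p)).factorization p := by
  have := Fact.mk hp
  set ℓ := orderOf (a : ZMod p)
  obtain ⟨m, rfl⟩ := hd
  have hℓ : ℓ ≠ 0 := left_ne_zero_of_mul hn
  have hm : m ≠ 0 := right_ne_zero_of_mul hn
  have hdvd : p ∣ a ^ ℓ - 1 := (prime_dvd_pow_sub_one_iff hp (by omega)).mpr dvd_rfl
  have hlte := padicValNat.pow_sub_pow hodd (one_lt_pow₀ ha hℓ)
    (by simpa using hdvd) (fun h => hpa (hp.dvd_of_dvd_pow h)) hm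
  rw [one_pow, ← pow_mul] at hlte
  simp only [factorization_def _ hp, Nat.mul_div_cancel_left m (pos_of_ne_zero hℓ), hlte]

theorem factorization_eq_card_pow_succ_dvd {m : ℕ} (hp : p.Prime) (hm : m ≠ 0) {K : ℕ}
    (hmK : m ≤ K) : m.factorization p = #{k ∈ range K | p ^ (k + 1) ∣ m} := by
  have hlt : m.factorization p < K := (factorization_lt p hm).trans_le hmK
  have hfilter : {k ∈ range K | p ^ (k + 1) ∣ m} = range (m.factorization p) := by
    ext k
    simp only [mem_filter, mem_range, hp.pow_dvd_iff_le_factorization hm]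
    omega
  rw [hfilter, card_range]

theorem card_filter_dvd_Ioc (b c d : ℕ) : #{n ∈ Ioc b c | d ∣ n} = c / d - b / d := by
  rcases le_total b c with hbc | hcb
  · have hsplit := card_union_of_disjoint (disjoint_filter_filter (s := Ioc 0 b) (t := Ioc b c)
      (p := (d ∣ ·)) (q := (d ∣ ·)) (Ioc_disjoint_Ioc_of_le le_rfl))
    rw [← filter_union, Ioc_union_Ioc_eq_Ioc (Nat.zero_le b) hbc,
      Ioc_filter_dvd_card_eq_div, Ioc_filter_dvd_card_eq_div] at hsplit
    omega
  · rw [Ioc_eq_empty_of_le hcb, filter_empty, card_empty,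
      Nat.sub_eq_zero_of_le (Nat.div_le_div_right hcb)]

theorem factorization_pow_sub_one_eq_ite_add_card (hp : p.Prime) (hodd : Odd p) (ha : 1 < a)
    (hpa : ¬p ∣ a) (hn : 0 < n) {K : ℕ} (hnK : n ≤ K) :
    (a ^ n - 1).factorization p =
      (if orderOf (a : ZMod p) ∣ n then (a ^ orderOf (a : ZMod p) - 1).factorization p else 0) +
        #{k ∈ range K | orderOf (a : ZMod p) * p ^ (k + 1) ∣ n} := by
  set ℓ := orderOf (a : ZMod p)
  by_cases hd : ℓ ∣ n
  · have hq : n / ℓ ≠ 0 := (Nat.div_pos (le_of_dvd hn hd) (pos_of_dvd_of_pos hd hn)).ne'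
    rw [if_pos hd, factorization_pow_sub_one_of_orderOf_dvd hp hodd ha hpa hn.ne' hd,
      factorization_eq_card_pow_succ_dvd hp hq ((Nat.div_le_self n ℓ).trans hnK)]
    simp only [ℓ, Nat.dvd_div_iff_mul_dvd hd]
  · have hempty : {k ∈ range K | ℓ * p ^ (k + 1) ∣ n} = ∅ :=
      filter_false_of_mem fun _ _ h => hd ((dvd_mul_right ℓ _).trans h)
    rw [if_neg hd, hempty, factorization_pow_sub_one_of_not_orderOf_dvd hp (by omega) hd]
    rfl

theorem sum_factorization_pow_sub_one_Ioc (hp : p.Prime) (hodd : Odd p) (ha : 1 < a)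
    (hpa : ¬p ∣ a) {b : ℕ} (hb : 0 < b) (c : ℕ) :
    ∑ n ∈ Ioc b c, (a ^ n - 1).factorization p =
      (c / orderOf (a : ZMod p) - b / orderOf (a : ZMod p)) *
          (a ^ orderOf (a : ZMod p) - 1).factorization p +
        ∑ k ∈ range c, (c / (orderOf (a : ZMod p) * p ^ (k + 1)) -
          b / (orderOf (a : ZMod p) * p ^ (k + 1))) := by
  set ℓ := orderOf (a : ZMod p)
  rw [sum_congr rfl fun n hn => factorization_pow_sub_one_eq_ite_add_card hp hodd ha hpa
      (hb.trans_le (mem_Ioc.mp hn).1.le) (mem_Ioc.mp hn).2, sum_add_distrib, ← sum_filter,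
    sum_const, smul_eq_mul, card_filter_dvd_Ioc]
  congr 1
  exact (sum_card_bipartiteAbove_eq_sum_card_bipartiteBelow (fun n k => ℓ * p ^ (k + 1) ∣ n)).trans
    (sum_congr rfl fun k _ => card_filter_dvd_Ioc b c _)

end PowSubOne

theorem lt_cast_mul_pow_succ_of_floor_le {K : Type*} [Semiring K] [LinearOrder K]
    [FloorSemiring K] {x : K} (hx : 0 ≤ x) {d p k : ℕ} (hd : 0 < d) (hp : 1 < p)
    (hk : ⌊x⌋₊ ≤ k) : x < ((d * p ^ (k + 1) : ℕ) : K) := by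
  refine (floor_lt hx).mp ?_
  calc ⌊x⌋₊ ≤ k := hk
    _ < p ^ (k + 1) := (Nat.lt_pow_self hp).trans' k.lt_succ_self
    _ ≤ d * p ^ (k + 1) := Nat.le_mul_of_pos_left _ hd

section Floor

variable {K : Type*} [Field K] [LinearOrder K] [IsStrictOrderedRing K] [FloorSemiring K]
  {x : K}

theorem floor_div_sub_floor_half_div_le_div (hx : 0 ≤ x) (d : ℕ) :
    ((⌊x⌋₊ / d - ⌊x / 2⌋₊ / d : ℕ) : K) ≤ x / d := by
  rw [← floor_div_natCast]
  exact (cast_le.mpr (sub_le _ _)).trans (floor_le (by positivity))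

theorem floor_two_mul_sub_floor_le (hx : 0 ≤ x) :
    ((⌊2 * x⌋₊ - ⌊x⌋₊ : ℕ) : K) ≤ x + 1 := by
  rw [cast_sub (floor_mono (by linarith))]
  linarith [floor_le (by linarith : 0 ≤ 2 * x), lt_floor_add_one x]

theorem floor_div_sub_floor_half_div_le (hx : 0 ≤ x) (d : ℕ) :
    ((⌊x⌋₊ / d - ⌊x / 2⌋₊ / d : ℕ) : K) ≤ x / (2 * d) + 1 := by
  have hx2 : x / d = 2 * (x / (2 * d)) := by
    rw [mul_div_assoc', mul_div_mul_left _ _ two_ne_zero]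
  rw [← floor_div_natCast, ← floor_div_natCast, hx2, div_div]
  exact floor_two_mul_sub_floor_le (by positivity)

theorem floor_div_sub_floor_half_div_le_ite (hx : 0 ≤ x) (d : ℕ) :
    ((⌊x⌋₊ / d - ⌊x / 2⌋₊ / d : ℕ) : K) ≤ if (d : K) ≤ x then x / (2 * d) + 1 else 0 := by
  split_ifs with hd
  · exact floor_div_sub_floor_half_div_le hx d
  · rw [div_eq_of_lt ((floor_lt hx).mpr (not_le.mp hd))]
    simp

end Floor

end Nat

theorem sum_range_div_pow_succ_le {x r : ℝ} (hx : 0 ≤ x) (hr : 2 ≤ r) (n : ℕ) :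
    ∑ k ∈ range n, x / r ^ (k + 1) ≤ 2 * (x / r) := by
  calc ∑ k ∈ range n, x / r ^ (k + 1) = x / r * ∑ k ∈ range n, (1 / r) ^ k := by
        rw [mul_sum]
        refine sum_congr rfl fun k _ => ?_
        rw [one_div, inv_pow, ← div_eq_mul_inv, div_div, ← pow_succ']
    _ ≤ x / r * ∑ k ∈ range n, (1 / 2) ^ k := by
        gcongr
    _ ≤ 2 * (x / r) := by
        rw [mul_comm 2]
        exact mul_le_mul_of_nonneg_left (sum_geometric_two_le n) (by positivity)

theorem sum_range_floor_div_mul_pow_succ_sub_le {x : ℝ} (hx : 0 ≤ x) (d : ℕ) {p : ℕ}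
    (hp : 2 ≤ p) (n : ℕ) :
    ∑ k ∈ range n, ((⌊x⌋₊ / (d * p ^ (k + 1)) - ⌊x / 2⌋₊ / (d * p ^ (k + 1)) : ℕ) : ℝ) ≤
      2 * (x / (d * p)) :=
  calc _ ≤ ∑ k ∈ range n, x / d / (p : ℝ) ^ (k + 1) := by
        gcongr with k
        simpa [div_div] using Nat.floor_div_sub_floor_half_div_le_div hx (d * p ^ (k + 1))
    _ ≤ 2 * (x / d / p) :=
        sum_range_div_pow_succ_le (by positivity) (Nat.ofNat_le_cast.mpr hp) n
    _ = 2 * (x / (d * p)) := by rw [div_div]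

theorem sum_valuation_interval_bound :
    ∃ C > 0, ∀ (a p : ℕ) (N : ℝ), 1 < a → p.Prime → p ≠ 2 → ¬ p ∣ a → 2 ≤ N →
    ∀ ℓ o : ℕ, ℓ = orderOf (a : ZMod p) → o = (a ^ ℓ - 1).factorization p →
    ((∑ n ∈ Finset.Ioc ⌊N / 2⌋₊ ⌊N⌋₊, ((a ^ n - 1).factorization p : ℝ)) ≤
        (N / (2 * ℓ) + 1) * o +
          ∑' k : ℕ, (if ((ℓ * p ^ (k + 1) : ℕ) : ℝ) ≤ N
            then N / (2 * ℓ * p ^ (k + 1)) + 1 else 0)) ∧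
    ((∑ n ∈ Finset.Ioc ⌊N / 2⌋₊ ⌊N⌋₊, ((a ^ n - 1).factorization p : ℝ)) ≤
        C * (N * o / ℓ + N / (ℓ * p) + Real.log N)) := by
  refine ⟨2, two_pos, fun a p N ha hp hp2 hpa hN ℓ o hℓ ho => ?_⟩
  have hN0 : 0 ≤ N := by linarith
  have hℓ0 : 0 < ℓ := hℓ ▸ Nat.orderOf_natCast_pos hp hpa
  have hb : 0 < ⌊N / 2⌋₊ := Nat.floor_pos.mpr (by linarith)
  have hsum := congrArg (Nat.cast (R := ℝ)) <|
    Nat.sum_factorization_pow_sub_one_Ioc hp (hp.odd_of_ne_two hp2) ha hpa hb ⌊N⌋₊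
  rw [← hℓ, ← ho] at hsum
  push_cast at hsum
  rw [hsum]
  constructor
  · have hvanish : ∀ k ∉ range ⌊N⌋₊, (if ((ℓ * p ^ (k + 1) : ℕ) : ℝ) ≤ N
        then N / (2 * ℓ * p ^ (k + 1)) + 1 else 0) = 0 := fun k hk =>
      if_neg (not_le.mpr (Nat.lt_cast_mul_pow_succ_of_floor_le hN0 hℓ0 hp.one_lt
        (not_lt.mp (mem_range.not.mp hk))))
    rw [tsum_eq_sum hvanish]
    gcongr with k
    · exact Nat.floor_div_sub_floor_half_div_le hN0 ℓ
    · simpa [mul_assoc] using Nat.floor_div_sub_floor_half_div_le_ite hN0 (ℓ * p ^ (k + 1))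
  · have hℓterm := mul_le_mul_of_nonneg_right (Nat.floor_div_sub_floor_half_div_le_div hN0 ℓ)
      (Nat.cast_nonneg (α := ℝ) o)
    rw [div_mul_eq_mul_div] at hℓterm
    have hpterms := sum_range_floor_div_mul_pow_succ_sub_le hN0 ℓ hp.two_le ⌊N⌋₊
    have hℓterm0 : 0 ≤ N * o / ℓ := by positivity
    have hlog := Real.log_nonneg (by linarith : 1 ≤ N)
    linarith
end

section
/- Let a > 1 be an integer. For every real N ≥ 2, Σ_{N/2 < n ≤ N} log(s_{N}(a^n - 1)) = O_a(N^2 / log N), where s_y(m) denotes the largest divisor of m all of whose prime factors are at most y. -/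
/-!
Write `log s_N(m) = ∑_{p ≤ N} v_p(m) log p`, enlarge the range of `n` to `(0, N]` and swap the
sums. Fix a prime `p ≤ N` and let `d` be the order of `a` modulo `p`. Then `p ∣ a^n - 1` only when
`d ∣ n`, and lifting the exponent gives `v_p(a^n - 1) ≤ v_p(a^{2d} - 1) + v_p(n)`. Since
`p^{v_p(a^{2d} - 1)} ≤ a^{2d}`, the multiples of `d` up to `N` contribute at most
`(N / d) · 2d log a = 2N log a`, besides `∑_n v_p(n) log p`. Summing over the `π(N) ≪ N / log N`
primes gives `2 π(N) N log a + ∑_{n ≤ N} log n ≪ N² / log N`.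
-/

/-- The `y`-smooth part of `m` : the largest divisor of `m` all of whose
prime factors are at most `y`. -/
noncomputable def smoothPart (y : ℝ) (m : ℕ) : ℕ :=
  ∏ p ∈ m.primeFactors, p ^ (if (p : ℝ) ≤ y then m.factorization p else 0)

open Finset Real

theorem smoothPart_eq_prod_primesLE (y : ℝ) (m : ℕ) :
    smoothPart y m = ∏ p ∈ Nat.primesLE ⌊y⌋₊, p ^ m.factorization p := by
  rw [smoothPart]
  simp_rw [pow_ite, pow_zero]
  rw [← prod_filter]
  refine prod_subset (fun p hp => ?_) (fun p hp hpm => ?_)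
  · simp only [mem_filter, Nat.mem_primeFactors] at hp
    exact Nat.mem_primesLE.2 ⟨(Nat.le_floor_iff' hp.1.1.ne_zero).2 hp.2, hp.1.1⟩
  · obtain ⟨hpy, hp⟩ := Nat.mem_primesLE.1 hp
    have hpm : p ∣ m → m = 0 := by
      simpa [hp, (Nat.le_floor_iff' hp.ne_zero).1 hpy] using hpm
    rw [(Nat.factorization_eq_zero_iff m p).2 (by tauto), pow_zero]

theorem smoothPart_dvd (y : ℝ) (m : ℕ) : smoothPart y m ∣ m := by
  rcases eq_or_ne m 0 with rfl | hm
  · exact dvd_zero _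
  conv_rhs => rw [Nat.prod_primeFactors_pow_factorization hm]
  exact prod_dvd_prod_of_dvd _ _ fun p _ => pow_dvd_pow p (by split_ifs <;> omega)

theorem log_smoothPart (y : ℝ) (m : ℕ) :
    log (smoothPart y m) = ∑ p ∈ Nat.primesLE ⌊y⌋₊, m.factorization p * log p := by
  rw [smoothPart_eq_prod_primesLE, Nat.cast_prod, log_prod]
  · simp [log_pow]
  · intro p hp
    have := (Nat.prime_of_mem_primesLE hp).pos
    positivity

theorem log_smoothPart_le {m : ℕ} (hm : m ≠ 0) (y : ℝ) : log (smoothPart y m) ≤ log m := by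
  have hle := Nat.le_of_dvd (Nat.pos_of_ne_zero hm) (smoothPart_dvd y m)
  have hpos := Nat.pos_of_dvd_of_pos (smoothPart_dvd y m) (Nat.pos_of_ne_zero hm)
  exact log_le_log (by exact_mod_cast hpos) (by exact_mod_cast hle)

theorem smoothPart_natCast_floor (y : ℝ) (m : ℕ) : smoothPart (⌊y⌋₊ : ℝ) m = smoothPart y m := by
  simp [smoothPart_eq_prod_primesLE]

theorem padicValNat_le_of_dvd {p a b : ℕ} [Fact p.Prime] (hb : b ≠ 0) (h : a ∣ b) :
    padicValNat p a ≤ padicValNat p b :=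
  (padicValNat_dvd_iff_le hb).1 (pow_padicValNat_dvd.trans h)

theorem dvd_pow_sub_one_iff_orderOf_dvd {p a : ℕ} (ha : 1 ≤ a) (n : ℕ) :
    p ∣ a ^ n - 1 ↔ orderOf (a : ZMod p) ∣ n := by
  rw [← ZMod.natCast_eq_zero_iff, Nat.cast_sub (Nat.one_le_pow _ _ ha), sub_eq_zero,
    orderOf_dvd_iff_pow_eq_one]
  push_cast
  rfl

theorem padicValNat_pow_sub_one_le {p x k : ℕ} [hp : Fact p.Prime] (hx : 1 < x) (hpx : p ∣ x - 1)
    (hk : k ≠ 0) :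
    padicValNat p (x ^ k - 1) ≤ padicValNat p (x ^ 2 - 1) + padicValNat p k := by
  have hpx' : ¬p ∣ x := fun h => hp.out.not_dvd_one <| by
    simpa [Nat.sub_sub_self hx.le] using Nat.dvd_sub h hpx
  have hsq : x ^ 2 - 1 = (x + 1) * (x - 1) := by simpa using Nat.sq_sub_sq x 1
  have hsq0 : x ^ 2 - 1 ≠ 0 := by rw [hsq]; exact mul_ne_zero (by omega) (by omega)
  rcases hp.out.eq_two_or_odd' with rfl | hodd
  · -- LTE at `2` needs an even exponent, so go through `x ^ (2 * k) - 1`.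
    have hlte := padicValNat.pow_two_sub_one hx hpx' (mul_ne_zero two_ne_zero hk) (even_two_mul k)
    rw [padicValNat.mul two_ne_zero hk, padicValNat.self one_lt_two] at hlte
    have hsqv : padicValNat 2 (x ^ 2 - 1) = padicValNat 2 (x + 1) + padicValNat 2 (x - 1) := by
      rw [hsq, padicValNat.mul (by omega) (by omega)]
    have hmono : padicValNat 2 (x ^ k - 1) ≤ padicValNat 2 (x ^ (2 * k) - 1) :=
      padicValNat_le_of_dvd (Nat.sub_ne_zero_of_lt (Nat.one_lt_pow (by omega) hx))
        (by simpa [pow_mul'] using Nat.sub_dvd_pow_sub_pow (x ^ k) 1 2)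
    omega
  · have hlte := padicValNat.pow_sub_pow hodd hx (by simpa using hpx) hpx' hk
    rw [one_pow] at hlte
    rw [hlte]
    gcongr
    exact padicValNat_le_of_dvd hsq0 (hsq ▸ dvd_mul_left _ _)

theorem factorization_pow_sub_one_le {a p n : ℕ} (ha : 1 < a) (hp : p.Prime) (hn : n ≠ 0)
    (hd : orderOf (a : ZMod p) ∣ n) :
    (a ^ n - 1).factorization p ≤
      (a ^ (2 * orderOf (a : ZMod p)) - 1).factorization p + n.factorization p := by
  have := Fact.mk hp
  set d := orderOf (a : ZMod p)
  obtain ⟨k, rfl⟩ := hd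
  have hd0 : d ≠ 0 := left_ne_zero_of_mul hn
  simp only [Nat.factorization_def _ hp]
  rw [pow_mul, mul_comm 2 d, pow_mul]
  calc _ ≤ padicValNat p ((a ^ d) ^ 2 - 1) + padicValNat p k :=
        padicValNat_pow_sub_one_le (Nat.one_lt_pow hd0 ha)
          ((dvd_pow_sub_one_iff_orderOf_dvd ha.le d).2 dvd_rfl) (right_ne_zero_of_mul hn)
    _ ≤ _ := by gcongr; exact padicValNat_le_of_dvd hn (dvd_mul_left k d)

theorem factorization_mul_log_le_log {m : ℕ} (hm : m ≠ 0) (p : ℕ) :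
    m.factorization p * log p ≤ log m := by
  rw [← log_pow]
  exact log_le_log (by exact_mod_cast Nat.ordProj_pos m p) (by exact_mod_cast Nat.ordProj_le p hm)

theorem factorization_pow_sub_one_mul_log_le {a p n : ℕ} (ha : 1 < a) (hp : p.Prime) (hn : n ≠ 0) :
    (a ^ n - 1).factorization p * log p ≤
      (if orderOf (a : ZMod p) ∣ n then 2 * orderOf (a : ZMod p) * log a else 0) +
        n.factorization p * log p := by
  set d := orderOf (a : ZMod p)
  have hlogp := log_natCast_nonneg p
  split_ifs with hd
  · have hd0 : d ≠ 0 := ne_zero_of_dvd_ne_zero hn hd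
    have h2d : a ^ (2 * d) - 1 ≠ 0 :=
      Nat.sub_ne_zero_of_lt (Nat.one_lt_pow (mul_ne_zero two_ne_zero hd0) ha)
    calc _ ≤ ((a ^ (2 * d) - 1).factorization p + n.factorization p : ℕ) * log p := by
          gcongr; exact factorization_pow_sub_one_le ha hp hn hd
      _ ≤ log ((a ^ (2 * d) - 1 : ℕ) : ℝ) + n.factorization p * log p := by
          push_cast
          rw [add_mul]
          gcongr
          exact factorization_mul_log_le_log h2d p
      _ ≤ log ((a ^ (2 * d) : ℕ) : ℝ) + n.factorization p * log p := by
          gcongr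
          exact_mod_cast Nat.sub_le _ _
      _ = _ := by push_cast; rw [log_pow]; push_cast; ring
  · rw [Nat.factorization_eq_zero_of_not_dvd (mt (dvd_pow_sub_one_iff_orderOf_dvd ha.le n).1 hd)]
    simp only [CharP.cast_eq_zero, zero_mul, zero_add]
    positivity

theorem sum_factorization_pow_sub_one_mul_log_le {a p : ℕ} (ha : 1 < a) (hp : p.Prime) (M : ℕ) :
    ∑ n ∈ Ioc 0 M, (a ^ n - 1).factorization p * log p ≤
      2 * M * log a + ∑ n ∈ Ioc 0 M, n.factorization p * log p := by
  set d := orderOf (a : ZMod p)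
  have hmultiples : ∑ n ∈ Ioc 0 M, (if d ∣ n then 2 * d * log a else 0) ≤ 2 * M * log a := by
    rw [← sum_filter, sum_const, Nat.Ioc_filter_dvd_card_eq_div, nsmul_eq_mul]
    have hdiv : ((M / d : ℕ) : ℝ) * d ≤ M := by exact_mod_cast Nat.div_mul_le_self M d
    have hloga := log_natCast_nonneg a
    nlinarith
  calc _ ≤ ∑ n ∈ Ioc 0 M, ((if d ∣ n then 2 * d * log a else 0) + n.factorization p * log p) :=
        sum_le_sum fun n hn => factorization_pow_sub_one_mul_log_le ha hp (mem_Ioc.1 hn).1.ne'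
    _ ≤ _ := by rw [sum_add_distrib]; gcongr

theorem sum_log_smoothPart_pow_sub_one_le {a : ℕ} (ha : 1 < a) (M : ℕ) :
    ∑ n ∈ Ioc 0 M, log (smoothPart M (a ^ n - 1)) ≤
      2 * Nat.primeCounting M * M * log a + M * log M := by
  have hsmooth (m : ℕ) :
      log (smoothPart M m) = ∑ p ∈ Nat.primesLE M, m.factorization p * log p := by
    simpa using log_smoothPart (M : ℝ) m
  have hlog_le : ∑ n ∈ Ioc 0 M, log (smoothPart M n) ≤ M * log M :=
    calc _ ≤ ∑ n ∈ Ioc 0 M, log M := sum_le_sum fun n hn => by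
            obtain ⟨hn0, hnM⟩ := mem_Ioc.1 hn
            exact (log_smoothPart_le hn0.ne' _).trans
              (log_le_log (by exact_mod_cast hn0) (by exact_mod_cast hnM))
      _ = M * log M := by simp
  calc _ = ∑ p ∈ Nat.primesLE M, ∑ n ∈ Ioc 0 M, (a ^ n - 1).factorization p * log p := by
        simp only [hsmooth]; exact sum_comm
    _ ≤ ∑ p ∈ Nat.primesLE M, (2 * M * log a + ∑ n ∈ Ioc 0 M, n.factorization p * log p) :=
        sum_le_sum fun p hp =>
          sum_factorization_pow_sub_one_mul_log_le ha (Nat.prime_of_mem_primesLE hp) M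
    _ = Nat.primeCounting M * (2 * M * log a) + ∑ n ∈ Ioc 0 M, log (smoothPart M n) := by
        rw [sum_add_distrib, sum_const, Nat.primesLE_card_eq_primeCounting, nsmul_eq_mul, sum_comm]
        simp only [hsmooth]
    _ ≤ _ := by linarith

theorem log_le_two_mul_sqrt {x : ℝ} (hx : 0 ≤ x) : log x ≤ 2 * √x := by
  simpa [sqrt_eq_rpow, div_eq_mul_inv, mul_comm] using
    log_le_rpow_div hx (by norm_num : (0 : ℝ) < 1 / 2)

theorem primeCounting_floor_le {x : ℝ} (hx : 2 ≤ x) :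
    (Nat.primeCounting ⌊x⌋₊ : ℝ) ≤ (2 * log 4 + 2) * x / log x := by
  have hlogx : 0 < log x := log_pos (by linarith)
  have hsqrt : √x * log x ≤ 2 * x := by
    have hlog := log_le_two_mul_sqrt (by linarith : (0 : ℝ) ≤ x)
    nlinarith [sqrt_nonneg x, sq_sqrt (by linarith : (0 : ℝ) ≤ x)]
  have hpi := Chebyshev.pi_le_log4_mul_div (by linarith : 1 < x)
  rw [log_sqrt (by linarith)] at hpi
  rw [le_div_iff₀ hlogx]
  calc _ ≤ (log 4 * x / (log x / 2) + √x) * log x := by gcongr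
    _ = 2 * log 4 * x + √x * log x := by field_simp
    _ ≤ _ := by linarith

theorem sum_log_smooth_part_interval
    (a : ℕ) (ha : 1 < a) :
    ∃ C > 0, ∀ N : ℝ, 2 ≤ N →
      (∑ n ∈ Finset.Ioc ⌊N / 2⌋₊ ⌊N⌋₊, Real.log (smoothPart N (a ^ n - 1))) ≤
        C * N ^ 2 / Real.log N := by
  set c := 2 * log 4 + 2
  have hloga : 0 < log a := log_pos (by exact_mod_cast ha)
  refine ⟨2 * c * log a + 4, by positivity, fun N hN => ?_⟩
  have hlogN : 0 < log N := log_pos (by linarith)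
  have hMN : (⌊N⌋₊ : ℝ) ≤ N := Nat.floor_le (by linarith)
  have hM1 : (1 : ℝ) ≤ ⌊N⌋₊ := by exact_mod_cast Nat.le_floor (by push_cast; linarith)
  have hNlogN : N * log N ≤ 4 * N ^ 2 / log N := by
    have hlog := log_le_two_mul_sqrt (by linarith : (0 : ℝ) ≤ N)
    rw [le_div_iff₀ hlogN]
    nlinarith [mul_self_le_mul_self hlogN.le hlog, sq_sqrt (by linarith : (0 : ℝ) ≤ N)]
  calc _ ≤ ∑ n ∈ Ioc 0 ⌊N⌋₊, log (smoothPart ⌊N⌋₊ (a ^ n - 1)) := by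
        simp only [smoothPart_natCast_floor]
        exact sum_le_sum_of_subset_of_nonneg (Ioc_subset_Ioc_left (Nat.zero_le _))
          fun _ _ _ => log_natCast_nonneg _
    _ ≤ 2 * Nat.primeCounting ⌊N⌋₊ * ⌊N⌋₊ * log a + ⌊N⌋₊ * log ⌊N⌋₊ :=
        sum_log_smoothPart_pow_sub_one_le ha _
    _ ≤ 2 * (c * N / log N) * N * log a + N * log N := by
        gcongr
        exact primeCounting_floor_le hN
    _ ≤ 2 * c * log a * N ^ 2 / log N + 4 * N ^ 2 / log N := by
        have : 2 * (c * N / log N) * N * log a = 2 * c * log a * N ^ 2 / log N := by ring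
        linarith
    _ = _ := by ring
end

section
/- Let a > 1 be an integer, i ≥ 0 an integer, and y, L ≥ 1 reals. The number of primes p with ord_p(a) ∈ (2^i, 2^{i+1}] and ν_p(a^{ord_p(a)} - 1) ≥ 2^i/(y·L) is O(2^i · y · L · log a). -/
/-! Every counted prime `p` has `d = ord_p(a) ∈ (2^i, 2^{i+1}]` and `ν_p(a^d - 1) ≥ t := 2^i/(yL)`;
since `a^d - 1` divides `N = ∏_{ℓ ∈ (2^i, 2^{i+1}]} (a^ℓ - 1)`, also `ν_p(N) ≥ t`. Hence
`2^{t · #primes} ≤ ∏_p p^{ν_p(N)} ≤ N ≤ a^{2^i · 2^{i+1}}`, and taking logarithms gives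
`#primes ≤ 2 · 2^i y L log a / log 2`. -/

open Finset Real

namespace Nat

theorem two_pow_sum_factorization_le {n : ℕ} (hn : n ≠ 0) {s : Finset ℕ}
    (hs : s ⊆ n.primeFactors) : 2 ^ ∑ p ∈ s, n.factorization p ≤ n :=
  calc 2 ^ ∑ p ∈ s, n.factorization p = ∏ p ∈ s, 2 ^ n.factorization p :=
        (prod_pow_eq_pow_sum _ _ _).symm
    _ ≤ ∏ p ∈ s, p ^ n.factorization p :=
        prod_le_prod' fun _ hp => pow_le_pow_left' (prime_of_mem_primeFactors (hs hp)).two_le _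
    _ ≤ ∏ p ∈ n.primeFactors, p ^ n.factorization p :=
        prod_le_prod_of_subset_of_one_le' hs fun _ hp _ =>
          one_le_pow _ _ (prime_of_mem_primeFactors hp).pos
    _ = n := (prod_primeFactors_pow_factorization hn).symm

theorem finite_and_card_mul_log_two_le_log_of_le_factorization {n : ℕ} (hn : n ≠ 0)
    {s : Set ℕ} {t : ℝ} (ht : 0 < t) (hs : ∀ p ∈ s, t ≤ n.factorization p) :
    s.Finite ∧ (Nat.card s : ℝ) * t * Real.log 2 ≤ Real.log n := by
  have hsub : s ⊆ n.primeFactors := fun p hp => by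
    rw [← support_factorization, Finset.mem_coe, Finsupp.mem_support_iff]
    exact_mod_cast (ht.trans_le (hs p hp)).ne'
  have hfin : s.Finite := n.primeFactors.finite_toSet.subset hsub
  refine ⟨hfin, ?_⟩
  rw [Nat.card_eq_card_finite_toFinset hfin]
  have hsum : (#hfin.toFinset : ℝ) * t ≤ ∑ p ∈ hfin.toFinset, (n.factorization p : ℝ) := by
    simpa using card_nsmul_le_sum _ _ t fun p hp => hs p (hfin.mem_toFinset.1 hp)
  have hpow : 2 ^ ∑ p ∈ hfin.toFinset, n.factorization p ≤ n :=
    two_pow_sum_factorization_le hn (hfin.toFinset_subset.2 hsub)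
  calc #hfin.toFinset * t * Real.log 2
      ≤ ((∑ p ∈ hfin.toFinset, n.factorization p : ℕ) : ℝ) * Real.log 2 := by
        push_cast; gcongr
    _ = Real.log (2 ^ ∑ p ∈ hfin.toFinset, n.factorization p : ℕ) := by
        rw [Nat.cast_pow, Nat.cast_ofNat, Real.log_pow]
    _ ≤ Real.log n := Real.log_le_log (by positivity) (by exact_mod_cast hpow)

end Nat

section PowSubOneProd

variable {a : ℕ}

theorem prod_Ioc_pow_sub_one_ne_zero (ha : 1 < a) (m n : ℕ) :
    ∏ ℓ ∈ Ioc m n, (a ^ ℓ - 1) ≠ 0 :=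
  prod_ne_zero_iff.2 fun ℓ hℓ =>
    Nat.sub_ne_zero_of_lt (Nat.one_lt_pow (by have := (mem_Ioc.1 hℓ).1; omega) ha)

theorem prod_Ioc_pow_sub_one_le (ha : 0 < a) (m n : ℕ) :
    ∏ ℓ ∈ Ioc m n, (a ^ ℓ - 1) ≤ a ^ ((n - m) * n) :=
  calc ∏ ℓ ∈ Ioc m n, (a ^ ℓ - 1) ≤ ∏ ℓ ∈ Ioc m n, a ^ ℓ := prod_le_prod' fun _ _ => Nat.sub_le _ _
    _ = a ^ ∑ ℓ ∈ Ioc m n, ℓ := prod_pow_eq_pow_sum _ _ _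
    _ ≤ a ^ ((n - m) * n) := Nat.pow_le_pow_right ha <| by
        simpa using sum_le_card_nsmul _ _ n fun ℓ hℓ => (mem_Ioc.1 hℓ).2

theorem factorization_pow_sub_one_le_prod_Ioc (ha : 1 < a) {m n d : ℕ} (hd : d ∈ Ioc m n) :
    (a ^ d - 1).factorization ≤ (∏ ℓ ∈ Ioc m n, (a ^ ℓ - 1)).factorization :=
  have hN := prod_Ioc_pow_sub_one_ne_zero ha m n
  (Nat.factorization_le_iff_dvd (prod_ne_zero_iff.1 hN d hd) hN).2 (dvd_prod_of_mem _ hd)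

end PowSubOneProd

theorem card_primes_dyadic_large_valuation :
    ∃ C > 0, ∀ (a : ℕ) (i : ℕ) (y L : ℝ), 1 < a → 1 ≤ y → 1 ≤ L →
      {p : ℕ | p.Prime ∧ ¬ p ∣ a ∧
          orderOf (a : ZMod p) ∈ Set.Ioc (2 ^ i) (2 ^ (i + 1)) ∧
          (2 : ℝ) ^ i / (y * L) ≤
            ((a ^ (orderOf (a : ZMod p)) - 1).factorization p : ℝ)}.Finite ∧
      (Nat.card {p : ℕ | p.Prime ∧ ¬ p ∣ a ∧
          orderOf (a : ZMod p) ∈ Set.Ioc (2 ^ i) (2 ^ (i + 1)) ∧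
          (2 : ℝ) ^ i / (y * L) ≤
            ((a ^ (orderOf (a : ZMod p)) - 1).factorization p : ℝ)} : ℝ) ≤
        C * 2 ^ i * y * L * Real.log a := by
  refine ⟨2 / log 2, by positivity, fun a i y L ha hy hL => ?_⟩
  have hN := prod_Ioc_pow_sub_one_ne_zero ha (2 ^ i) (2 ^ (i + 1))
  refine And.imp_right (fun hcard => ?_)
    (Nat.finite_and_card_mul_log_two_le_log_of_le_factorization hN (by positivity)
      fun p ⟨_, _, hord, hval⟩ => hval.trans (by
        exact_mod_cast factorization_pow_sub_one_le_prod_Ioc ha (mem_Ioc.2 hord) p))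
  have hlogN : log (∏ ℓ ∈ Ioc (2 ^ i) (2 ^ (i + 1)), (a ^ ℓ - 1) : ℕ)
      ≤ 2 ^ i * 2 ^ (i + 1) * log a := by
    have hle := prod_Ioc_pow_sub_one_le (by omega : 0 < a) (2 ^ i) (2 ^ (i + 1))
    rw [show 2 ^ (i + 1) - 2 ^ i = 2 ^ i by rw [pow_succ]; omega] at hle
    calc _ ≤ log (a ^ (2 ^ i * 2 ^ (i + 1)) : ℕ) :=
          log_le_log (by positivity) (by exact_mod_cast hle)
      _ = _ := by push_cast; rw [log_pow]; push_cast; ring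
  have hlog2 : 0 < log 2 := log_pos one_lt_two
  rw [show 2 / log 2 * 2 ^ i * y * L * log a
      = 2 ^ i * 2 ^ (i + 1) * log a / (2 ^ i / (y * L) * log 2) by field_simp; ring,
    le_div_iff₀ (by positivity), ← mul_assoc]
  exact hcard.trans hlogN
end

section
/- Assume the ABC conjecture. Let a > 1 be an integer, 1 < c < a real, K ≥ 1. Then there is a constant C = C(a,c,K) > 0 such that for all sufficiently large n, if s_{Kn}(a^n - 1) > c^n then Σ_{p ≤ Kn, p ∣ a^n - 1} log p ≥ C·n. -/
/-!
Apply ABC to `1 + (aⁿ - 1) = aⁿ`. Write `aⁿ - 1` as its `Kn`-smooth part times its rough part;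
since the smooth part exceeds `cⁿ`, the rough part is at most `(a/c)ⁿ`, so
`rad((aⁿ - 1) aⁿ) ≤ R · (a/c)ⁿ · a`, where `R` is the product of the primes `p ≤ Kn` dividing
`aⁿ - 1`. ABC then gives `n log a ≤ (1 + ε)(log R + n log (a/c)) + O(1)`, and for `ε` with
`(1 + ε) log (a/c) = log a - (log c)/2` this leaves `log R ≥ n log c / (2(1 + ε)) - O(1)`.
-/

/-- The radical of an integer: product of its distinct prime factors. -/
def intRadical (m : ℤ) : ℕ := ∏ p ∈ m.natAbs.primeFactors, p

/-- The ABC conjecture. -/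
def ABCConjecture : Prop :=
  ∀ ε : ℝ, 0 < ε → ∃ Kε : ℝ, 0 < Kε ∧
    ∀ A B C : ℤ, A ≠ 0 → B ≠ 0 → C ≠ 0 → IsCoprime A B → A + B = C →
      (max |A| (max |B| |C|) : ℝ) ≤ Kε * (intRadical (A * B * C) : ℝ) ^ (1 + ε)

noncomputable def roughPart (y : ℝ) (m : ℕ) : ℕ :=
  ∏ p ∈ m.primeFactors, p ^ (if (p : ℝ) ≤ y then 0 else m.factorization p)

noncomputable def smoothRadical (y : ℝ) (m : ℕ) : ℕ :=
  ∏ p ∈ m.primeFactors.filter (fun p : ℕ => (p : ℝ) ≤ y), p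

lemma smoothPart_mul_roughPart (y : ℝ) {m : ℕ} (hm : m ≠ 0) :
    smoothPart y m * roughPart y m = m := by
  rw [smoothPart, roughPart, ← Finset.prod_mul_distrib]
  conv_rhs => rw [Nat.prod_primeFactors_pow_factorization hm]
  refine Finset.prod_congr rfl fun p _ => ?_
  split_ifs <;> simp

lemma roughPart_mul_le {y x : ℝ} {m : ℕ} (hm : m ≠ 0) (hx : x ≤ smoothPart y m) :
    roughPart y m * x ≤ m :=
  calc (roughPart y m : ℝ) * x ≤ roughPart y m * smoothPart y m := by gcongr
    _ = m := by rw [mul_comm]; exact_mod_cast smoothPart_mul_roughPart y hm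

lemma smoothRadical_pos (y : ℝ) (m : ℕ) : 0 < smoothRadical y m :=
  Finset.prod_pos fun _ hp => Nat.pos_of_mem_primeFactors (Finset.mem_filter.1 hp).1

lemma prod_primeFactors_le_smoothRadical_mul_roughPart (y : ℝ) (m : ℕ) :
    ∏ p ∈ m.primeFactors, p ≤ smoothRadical y m * roughPart y m := by
  rw [smoothRadical, roughPart, Finset.prod_filter, ← Finset.prod_mul_distrib]
  refine Finset.prod_le_prod' fun p hp => ?_
  split_ifs
  · simp
  · simpa using Nat.le_self_pow
      (Finsupp.mem_support_iff.1 (Nat.support_factorization m ▸ hp)) p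

lemma intRadical_natCast (m : ℕ) : intRadical m = ∏ p ∈ m.primeFactors, p := by
  rw [intRadical, Int.natAbs_natCast]

lemma intRadical_pos (x : ℤ) : 0 < intRadical x :=
  Finset.prod_pos fun _ hp => Nat.pos_of_mem_primeFactors hp

lemma intRadical_zero : intRadical 0 = 1 := by
  simp [intRadical]

lemma intRadical_mul_le (x y : ℤ) : intRadical (x * y) ≤ intRadical x * intRadical y := by
  rcases eq_or_ne x 0 with rfl | hx
  · rw [zero_mul, intRadical_zero, one_mul]; exact intRadical_pos y
  rcases eq_or_ne y 0 with rfl | hy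
  · rw [mul_zero, intRadical_zero, mul_one]; exact intRadical_pos x
  rw [intRadical, Int.natAbs_mul, Nat.primeFactors_mul (by simpa) (by simpa)]
  calc ∏ p ∈ x.natAbs.primeFactors ∪ y.natAbs.primeFactors, p
      ≤ (∏ p ∈ x.natAbs.primeFactors ∪ y.natAbs.primeFactors, p) *
          ∏ p ∈ x.natAbs.primeFactors ∩ y.natAbs.primeFactors, p :=
        Nat.le_mul_of_pos_right _ (Finset.prod_pos fun _ hp => Nat.pos_of_mem_primeFactors
          (Finset.mem_inter.1 hp).1)
    _ = intRadical x * intRadical y := Finset.prod_union_inter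

lemma intRadical_pow (x : ℤ) {n : ℕ} (hn : n ≠ 0) : intRadical (x ^ n) = intRadical x := by
  rw [intRadical, Int.natAbs_pow, Nat.primeFactors_pow _ hn, intRadical]

lemma intRadical_le_natAbs {x : ℤ} (hx : x ≠ 0) : intRadical x ≤ x.natAbs :=
  Nat.le_of_dvd (by simpa [Nat.pos_iff_ne_zero]) (Nat.prod_primeFactors_dvd _)

lemma ABCConjecture.exists_succ_le (hABC : ABCConjecture) {ε : ℝ} (hε : 0 < ε) :
    ∃ Kε > 0, ∀ m : ℕ, m ≠ 0 →
      (m + 1 : ℝ) ≤ Kε * (intRadical (m * (m + 1)) : ℝ) ^ (1 + ε) := by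
  obtain ⟨Kε, hKε, habc⟩ := hABC ε hε
  refine ⟨Kε, hKε, fun m hm => ?_⟩
  have := habc 1 m (m + 1) one_ne_zero (by exact_mod_cast hm) (by omega) isCoprime_one_left
    (add_comm _ _)
  rw [one_mul] at this
  refine le_trans ?_ this
  push_cast
  exact le_max_of_le_right (le_max_of_le_right (le_abs_self _))

lemma intRadical_mul_pow_le (m : ℕ) {a n : ℕ} (ha : a ≠ 0) (hn : n ≠ 0) (y : ℝ) :
    intRadical (m * (a : ℤ) ^ n) ≤ smoothRadical y m * roughPart y m * a :=
  calc intRadical (m * (a : ℤ) ^ n) ≤ intRadical m * intRadical a := by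
        grw [intRadical_mul_le, intRadical_pow _ hn]
    _ ≤ smoothRadical y m * roughPart y m * a := by
        gcongr
        · rw [intRadical_natCast]
          exact prod_primeFactors_le_smoothRadical_mul_roughPart y m
        · simpa using intRadical_le_natAbs (Int.natCast_ne_zero.2 ha)

lemma roughPart_le_div_pow {a n : ℕ} {y c : ℝ} (hc : 0 < c) (ha : 1 < a) (hn : n ≠ 0)
    (hsmooth : c ^ n ≤ smoothPart y (a ^ n - 1)) :
    (roughPart y (a ^ n - 1) : ℝ) ≤ (a / c) ^ n := by
  have hm : a ^ n - 1 ≠ 0 := Nat.sub_ne_zero_of_lt (Nat.one_lt_pow hn ha)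
  rw [div_pow, le_div_iff₀ (by positivity)]
  calc (roughPart y (a ^ n - 1) : ℝ) * c ^ n ≤ (a ^ n - 1 : ℕ) := roughPart_mul_le hm hsmooth
    _ ≤ (a : ℝ) ^ n := by exact_mod_cast Nat.sub_le _ _

lemma ABCConjecture.exists_pow_le_smoothRadical (hABC : ABCConjecture) {ε : ℝ} (hε : 0 < ε) :
    ∃ Kε > 0, ∀ (a n : ℕ) (y c : ℝ), 1 < a → n ≠ 0 → 0 < c →
      c ^ n ≤ smoothPart y (a ^ n - 1) →
      (a : ℝ) ^ n ≤ Kε * (smoothRadical y (a ^ n - 1) * (a / c) ^ n * a) ^ (1 + ε) := by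
  obtain ⟨Kε, hKε, habc⟩ := hABC.exists_succ_le hε
  refine ⟨Kε, hKε, fun a n y c ha hn hc hsmooth => ?_⟩
  have hpow : 1 ≤ a ^ n := Nat.one_le_pow _ _ (by omega)
  have hm : a ^ n - 1 ≠ 0 := Nat.sub_ne_zero_of_lt (Nat.one_lt_pow hn ha)
  have hsucc : ((a ^ n - 1 : ℕ) : ℤ) + 1 = (a : ℤ) ^ n := by push_cast [hpow]; ring
  have hrad := intRadical_mul_pow_le (a ^ n - 1) (by omega : a ≠ 0) hn y
  rw [← hsucc] at hrad
  calc (a : ℝ) ^ n = ((a ^ n - 1 : ℕ) : ℝ) + 1 := by push_cast [hpow]; ring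
    _ ≤ Kε * (intRadical ((a ^ n - 1 : ℕ) * ((a ^ n - 1 : ℕ) + 1)) : ℝ) ^ (1 + ε) := habc _ hm
    _ ≤ Kε * (smoothRadical y (a ^ n - 1) * (a / c) ^ n * a) ^ (1 + ε) := by
        gcongr
        calc (intRadical _ : ℝ) ≤ (smoothRadical y (a ^ n - 1) * roughPart y (a ^ n - 1) * a : ℕ) :=
              by exact_mod_cast hrad
          _ ≤ _ := by push_cast; gcongr; exact roughPart_le_div_pow hc ha hn hsmooth

lemma sum_log_primes_eq_log_smoothRadical (y : ℝ) {m : ℕ} (hm : m ≠ 0) :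
    ∑ p ∈ (Finset.range (⌊y⌋₊ + 1)).filter (fun p : ℕ => p.Prime ∧ (p : ℝ) ≤ y ∧ p ∣ m),
      Real.log p = Real.log (smoothRadical y m) := by
  have hprimes : (Finset.range (⌊y⌋₊ + 1)).filter (fun p : ℕ => p.Prime ∧ (p : ℝ) ≤ y ∧ p ∣ m)
      = m.primeFactors.filter (fun p : ℕ => (p : ℝ) ≤ y) := by
    ext p
    simp only [Finset.mem_filter, Finset.mem_range, Nat.lt_succ_iff, Nat.mem_primeFactors]
    exact ⟨fun ⟨_, hp, hpy, hpm⟩ => ⟨⟨hp, hpm, hm⟩, hpy⟩,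
      fun ⟨⟨hp, hpm, _⟩, hpy⟩ => ⟨Nat.le_floor hpy, hp, hpy, hpm⟩⟩
  rw [hprimes, smoothRadical, Nat.cast_prod, Real.log_prod]
  exact fun p hp => Nat.cast_ne_zero.2 (Nat.pos_of_mem_primeFactors (Finset.mem_filter.1 hp).1).ne'

lemma log_ge_of_pow_le_rpow {a c Kε ε R : ℝ} (n : ℕ) (ha : 0 < a) (hc : 0 < c)
    (hKε : 0 < Kε) (hR : 0 < R) (hε : 0 < ε)
    (hεeq : ε * (Real.log a - Real.log c) = Real.log c / 2)
    (h : a ^ n ≤ Kε * (R * (a / c) ^ n * a) ^ (1 + ε)) :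
    Real.log c / (2 * (1 + ε)) * n - (Real.log Kε / (1 + ε) + Real.log a) ≤ Real.log R := by
  have hlog := Real.log_le_log (by positivity) h
  rw [Real.log_mul hKε.ne' (by positivity), Real.log_rpow (by positivity),
    Real.log_mul (by positivity) ha.ne', Real.log_mul hR.ne' (by positivity), Real.log_pow,
    Real.log_pow, Real.log_div ha.ne' hc.ne'] at hlog
  have hscaled : (1 + ε) * (Real.log c / (2 * (1 + ε)) * n - (Real.log Kε / (1 + ε) + Real.log a))
      = n * Real.log a - Real.log Kε - (1 + ε) * (n * (Real.log a - Real.log c) + Real.log a) := by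
    field_simp
    linear_combination (2 * (n : ℝ)) * hεeq
  refine le_of_mul_le_mul_left ?_ (by positivity : 0 < 1 + ε)
  linarith

theorem abc_implies_sum_log_primes_large_general
    (hABC : ABCConjecture)
    (a : ℕ) (ha : 1 < a) (c : ℝ) (hc1 : 1 < c) (hca : c < a) (K : ℝ) :
    ∃ C > 0, ∃ N₀ : ℕ, ∀ n : ℕ, N₀ ≤ n →
      (c : ℝ) ^ n < (smoothPart (K * (n : ℝ)) (a ^ n - 1) : ℝ) →
      C * n ≤ ∑ p ∈ (Finset.range (⌊K * (n : ℝ)⌋₊ + 1)).filter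
          (fun p : ℕ => p.Prime ∧ (p : ℝ) ≤ K * (n : ℝ) ∧ p ∣ a ^ n - 1), Real.log p := by
  have hlogc : 0 < Real.log c := Real.log_pos hc1
  have hlogca : 0 < Real.log a - Real.log c := sub_pos.2 (Real.log_lt_log (by linarith) hca)
  obtain ⟨ε, hε, hεeq⟩ : ∃ ε > 0, ε * (Real.log a - Real.log c) = Real.log c / 2 :=
    ⟨Real.log c / (2 * (Real.log a - Real.log c)), by positivity, by field_simp⟩
  obtain ⟨Kε, hKε, hpow_le⟩ := hABC.exists_pow_le_smoothRadical hε
  set C := Real.log c / (4 * (1 + ε))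
  set B := Real.log Kε / (1 + ε) + Real.log a with hB
  refine ⟨C, by positivity, max 1 ⌈B / C⌉₊, fun n hn hsmooth => ?_⟩
  have hn0 : n ≠ 0 := by have := le_of_max_le_left hn; omega
  have hBn : B ≤ C * n := by
    rw [← div_le_iff₀' (by positivity)]
    exact Nat.ceil_le.1 (le_of_max_le_right hn)
  have hm : a ^ n - 1 ≠ 0 := Nat.sub_ne_zero_of_lt (Nat.one_lt_pow hn0 ha)
  have hR := log_ge_of_pow_le_rpow n (by positivity) (by positivity) hKε
    (by exact_mod_cast smoothRadical_pos _ _) hε hεeq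
    (hpow_le a n _ c ha hn0 (by positivity) hsmooth.le)
  have hC : Real.log c / (2 * (1 + ε)) = 2 * C := by simp only [C]; field_simp; ring
  rw [sum_log_primes_eq_log_smoothRadical _ hm]
  rw [hC, ← hB] at hR
  linarith

theorem abc_implies_sum_log_primes_large
    (hABC : ABCConjecture)
    (a : ℕ) (ha : 1 < a) (c : ℝ) (hc1 : 1 < c) (hca : c < a) (K : ℝ) (hK : 1 ≤ K) :
    ∃ C > 0, ∃ N₀ : ℕ, ∀ n : ℕ, N₀ ≤ n →
      (c : ℝ) ^ n < (smoothPart (K * (n : ℝ)) (a ^ n - 1) : ℝ) →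
      C * n ≤ ∑ p ∈ (Finset.range (⌊K * (n : ℝ)⌋₊ + 1)).filter
          (fun p : ℕ => p.Prime ∧ (p : ℝ) ≤ K * (n : ℝ) ∧ p ∣ a ^ n - 1), Real.log p :=
  abc_implies_sum_log_primes_large_general hABC a ha c hc1 hca K
end
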